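/- For the two-site model, define on X₊ the coordinate functions ξ_e := (h_e, L_f h_e, L_f² h_e, L_f³ h_e, L_f⁴ h_e), ξ_h := (h_h, L_f h_h, L_f² h_h, L_f³ h_h), and η := (x_g3, x_e1, x_e2, x_h3), and the map r := (f_g3, f_e1, f_e2, f_h3). Then for any two points x, x' ∈ X₊ that agree in all coordinates except possibly the coordinate x_h3, one has ξ_e(x) = ξ_e(x'), ξ_h(x) = ξ_h(x'), (η1, η2, η3)(x) = (η1, η2, η3)(x'), and r(x) = r(x'). (This is the content of Lemma 3: the zero-dynamics vector field q = r ∘ Φ⁻¹ of the two-site model is independent of the variable η4 = x_h3.) -/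
import Mathlib


noncomputable section

/-- Parameters of the two-site electricity and heat supply model, together
with the sign conditions assumed in the paper. -/
structure Params where
  (Tv1 Tf1 TCD1 Tv2 Tf2 TCD2 : ℝ)
  (Te1 Te2 D1 D2 : ℝ)
  (Ke1 Ke2 Kh1 Kh2 : ℝ)
  (Th1 Th2 Th3 : ℝ)
  (rhos lam len dia hc : ℝ)
  (E1 E2 Einf : ℝ)
  (B10 B20 B12 : ℝ)
  (G10 G20 G12 : ℝ)
  (beta1 beta2 : ℝ)
  (Wo1 Wo2 : ℝ)
  (QL1 QL2 : ℝ)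
  hTv1 : 0 < Tv1
  hTf1 : 0 < Tf1
  hTCD1 : 0 < TCD1
  hTv2 : 0 < Tv2
  hTf2 : 0 < Tf2
  hTCD2 : 0 < TCD2
  hTe1 : 0 < Te1
  hTe2 : 0 < Te2
  hD1 : 0 < D1
  hD2 : 0 < D2
  hKe1 : 0 < Ke1
  hKe2 : 0 < Ke2
  hKh1 : 0 < Kh1
  hKh2 : 0 < Kh2
  hTh1 : 0 < Th1
  hTh2 : 0 < Th2
  hTh3 : 0 < Th3
  hrhos : 0 < rhos
  hlam : 0 < lam
  hlen : 0 < len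
  hdia : 0 < dia
  hhc : 0 < hc
  hE1 : 0 < E1
  hE2 : 0 < E2
  hEinf : 0 < Einf
  hB10 : 0 < B10
  hB20 : 0 < B20
  hB12 : 0 < B12
  hG10 : 0 ≤ G10
  hG20 : 0 ≤ G20
  hG12 : 0 ≤ G12
  hbeta1 : 0 ≤ beta1
  hbeta2 : 0 ≤ beta2
  hWo1 : Wo1 ∈ Set.Ioo (0 : ℝ) 1
  hWo2 : Wo2 ∈ Set.Ioo (0 : ℝ) 1

/-- The state space of the two-site model: `x = (x_g1,…,x_g6, x_e1,…,x_e4,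
x_h1, x_h2, x_h3) ∈ ℝ¹³`.  Index convention: `x i` for `i = 0,…,5` are the gas
turbine variables `x_g1,…,x_g6`; `x 6, x 7, x 8, x 9` are `x_e1, x_e2, x_e3,
x_e4`; `x 10, x 11, x 12` are `x_h1, x_h2, x_h3`. -/
abbrev St : Type := Fin 13 → ℝ

namespace Params

variable (p : Params)

/-- `c = (π/4)·h_c·ρ_s`. -/
def cc : ℝ := (Real.pi / 4) * p.hc * p.rhos

/-- Mechanical power of turbine 1. -/
def Pm1 (x : St) : ℝ := p.Ke1 * (x 2 - p.Wo1) / (1 - p.Wo1)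

/-- Mechanical power of turbine 2. -/
def Pm2 (x : St) : ℝ := p.Ke2 * (x 5 - p.Wo2) / (1 - p.Wo2)

/-- Electric output power of generator 1. -/
def Pe1 (x : St) : ℝ :=
  p.E1 * p.Einf * (p.G10 * Real.cos (x 6) + p.B10 * Real.sin (x 6))
    + p.E1 * p.E2 * (p.G12 * Real.cos (x 6 - x 8) + p.B12 * Real.sin (x 6 - x 8))

/-- Electric output power of generator 2. -/
def Pe2 (x : St) : ℝ :=
  p.E2 * p.Einf * (p.G20 * Real.cos (x 8) + p.B20 * Real.sin (x 8))
    + p.E2 * p.E1 * (p.G12 * Real.cos (x 8 - x 6) + p.B12 * Real.sin (x 8 - x 6))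

/-- Heat output of recovery boiler 1. -/
def Qa1 (x : St) : ℝ := p.Kh1 * (x 1 + p.beta1) / (1 + p.beta1)

/-- Heat output of recovery boiler 2. -/
def Qa2 (x : St) : ℝ := p.Kh2 * (x 4 + p.beta2) / (1 + p.beta2)

/-- The drift vector field `f` of the two-site model. -/
def drift (x : St) : St :=
  ![ (-x 0 + p.Wo1) / p.Tv1,
     (-x 1 + x 0) / p.Tf1,
     (-x 2 + x 1) / p.TCD1,
     (-x 3 + p.Wo2) / p.Tv2,
     (-x 4 + x 3) / p.Tf2,
     (-x 5 + x 4) / p.TCD2,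
     x 7 / p.Te1,
     (p.Pm1 x - p.D1 * x 7 - p.Pe1 x) / p.Te1,
     x 9 / p.Te2,
     (p.Pm2 x - p.D2 * x 9 - p.Pe2 x) / p.Te2,
     (p.Qa1 x - p.QL1 - p.cc * x 11) / p.Th1
       - (p.Qa2 x - p.QL2 + p.cc * x 11) / p.Th2,
     (x 10 / p.rhos - (p.lam * p.len / (2 * p.dia)) * x 11 * |x 11|) / p.Th3,
     p.Qa1 x - p.QL1 + p.Qa2 x - p.QL2 ]

/-- The input vector field `g_1`. -/
def g1 : St → St := fun _ => Pi.single 0 ((1 - p.Wo1) / p.Tv1)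

/-- The input vector field `g_2`. -/
def g2 : St → St := fun _ => Pi.single 3 ((1 - p.Wo2) / p.Tv2)

/-- The output `h_e`: electric power to the infinite bus. -/
def hE (x : St) : ℝ :=
  p.E1 * p.Einf * (p.B10 * Real.sin (x 6) - p.G10 * Real.cos (x 6))
    + p.E2 * p.Einf * (p.B20 * Real.sin (x 8) - p.G20 * Real.cos (x 8))

/-- The output `h_h`: heat flow rate through the pipe. -/
def hH (x : St) : ℝ := p.cc * x 11

end Params

/-- Lie derivative `L_v h (x) = Dh(x)·v(x)` of a function along a vector
field. -/
def lie (v : St → St) (h : St → ℝ) (x : St) : ℝ := fderiv ℝ h x (v x)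

/-- Iterated Lie derivative `L_v^k h`. -/
def lieIt (v : St → St) : ℕ → (St → ℝ) → (St → ℝ)
  | 0, h => h
  | n + 1, h => lie v (lieIt v n h)

/-- The open set `X₊ = { x : x_h2 > 0 }` on which the drift is smooth. -/
def Xplus : Set St := { x : St | 0 < x 11 }

/-- The continuous linear projection zeroing the last coordinate `x_h3`. -/
def Q12 : St →L[ℝ] St :=
  ContinuousLinearMap.pi (fun i : Fin 13 =>
    if i = (12 : Fin 13) then 0 else ContinuousLinearMap.proj i)

lemma Q12_apply_ne (z : St) (i : Fin 13) (h : i ≠ 12) : Q12 z i = z i := by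
  simp [Q12, h]

lemma Q12_apply_12 (z : St) : Q12 z 12 = 0 := by
  simp [Q12]

lemma Q12_idem (z : St) : Q12 (Q12 z) = Q12 z := by
  funext i
  by_cases h : i = (12 : Fin 13)
  · subst h; rw [Q12_apply_12, Q12_apply_12]
  · rw [Q12_apply_ne _ _ h, Q12_apply_ne _ _ h]

/-- The drift only reads the coordinates other than `x_h3`. -/
lemma drift_congr (p : Params) {x x' : St}
    (hagree : ∀ i : Fin 13, i ≠ 12 → x i = x' i) : p.drift x = p.drift x' := by
  have h0 := hagree 0 (by decide)
  have h1 := hagree 1 (by decide)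
  have h2 := hagree 2 (by decide)
  have h3 := hagree 3 (by decide)
  have h4 := hagree 4 (by decide)
  have h5 := hagree 5 (by decide)
  have h6 := hagree 6 (by decide)
  have h7 := hagree 7 (by decide)
  have h8 := hagree 8 (by decide)
  have h9 := hagree 9 (by decide)
  have h10 := hagree 10 (by decide)
  have h11 := hagree 11 (by decide)
  funext i
  fin_cases i <;>
    simp [Params.drift, Params.Pm1, Params.Pm2, Params.Pe1, Params.Pe2,
      Params.Qa1, Params.Qa2, h0, h1, h2, h3, h4, h5, h6, h7, h8, h9, h10, h11]

/-- If `h` is invariant under `Q12`, then so is its Lie derivative along the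
drift (no differentiability assumptions needed, thanks to junk values). -/
lemma lie_invariant (p : Params) (h : St → ℝ)
    (hinv : ∀ z : St, h (Q12 z) = h z) (y : St) :
    lie p.drift h (Q12 y) = lie p.drift h y := by
  have hcomp : h ∘ ⇑Q12 = h := funext hinv
  have hdrift : p.drift (Q12 y) = p.drift y :=
    drift_congr p (fun i hi => Q12_apply_ne y i hi)
  set c : St := y - Q12 y with hc
  have hQc : Q12 c = 0 := by rw [hc, map_sub, Q12_idem, sub_self]
  have htrans : ∀ w : St, h (w + c) = h w := by
    intro w
    have hq : Q12 (w + c) = Q12 w := by rw [map_add, hQc, add_zero]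
    rw [← hinv (w + c), hq, hinv]
  have key : ∀ (a b e : St), (∀ w : St, h (w + e) = h w) → a + e = b →
      DifferentiableAt ℝ h b → DifferentiableAt ℝ h a := by
    intro a b e he hab hd
    have hfun : (fun w : St => h (w + e)) = h := funext he
    rw [← hfun]
    have hi : DifferentiableAt ℝ (fun w : St => w + e) a :=
      (differentiableAt_id.add_const e)
    have hd' : DifferentiableAt ℝ h (a + e) := by rw [hab]; exact hd
    exact hd'.comp a hi
  have htrans' : ∀ w : St, h (w + -c) = h w := by
    intro w
    have := htrans (w + -c)
    rw [show w + -c + c = w by abel] at this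
    exact this.symm
  have hyc : Q12 y + c = y := by rw [hc]; abel
  have hyc' : y + -c = Q12 y := by rw [hc]; abel
  by_cases hd : DifferentiableAt ℝ h y
  · have hdQ : DifferentiableAt ℝ h (Q12 y) := key (Q12 y) y c htrans hyc hd
    have chain : ∀ a : St, DifferentiableAt ℝ h (Q12 a) →
        fderiv ℝ h a = (fderiv ℝ h (Q12 a)).comp (Q12 : St →L[ℝ] St) := by
      intro a ha
      have := fderiv_comp a ha (Q12 : St →L[ℝ] St).differentiableAt
      rw [hcomp, ContinuousLinearMap.fderiv] at this
      exact this
    have e1 : fderiv ℝ h y = (fderiv ℝ h (Q12 y)).comp (Q12 : St →L[ℝ] St) :=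
      chain y hdQ
    have e2 : fderiv ℝ h (Q12 y)
        = (fderiv ℝ h (Q12 y)).comp (Q12 : St →L[ℝ] St) := by
      have := chain (Q12 y) (by rw [Q12_idem]; exact hdQ)
      rwa [Q12_idem] at this
    show fderiv ℝ h (Q12 y) (p.drift (Q12 y)) = fderiv ℝ h y (p.drift y)
    rw [hdrift, e1]
    conv_lhs => rw [e2]
  · have hdQ : ¬ DifferentiableAt ℝ h (Q12 y) := fun hq =>
      hd (key y (Q12 y) (-c) htrans' hyc' hq)
    show fderiv ℝ h (Q12 y) (p.drift (Q12 y)) = fderiv ℝ h y (p.drift y)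
    rw [fderiv_zero_of_not_differentiableAt hd,
      fderiv_zero_of_not_differentiableAt hdQ]
    simp

lemma lieIt_invariant (p : Params) (h : St → ℝ)
    (hinv : ∀ z : St, h (Q12 z) = h z) :
    ∀ k : ℕ, ∀ z : St, lieIt p.drift k h (Q12 z) = lieIt p.drift k h z := by
  intro k
  induction k with
  | zero => exact hinv
  | succ n ih => exact fun z => lie_invariant p (lieIt p.drift n h) ih z

/-- Lemma 3 of the paper. The normal-form coordinate
functions `ξ_e = (h_e, L_f h_e, …, L_f⁴ h_e)`, `ξ_h = (h_h, …, L_f³ h_h)`,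
`(η₁, η₂, η₃) = (x_g3, x_e1, x_e2)` and the map
`r = (f_g3, f_e1, f_e2, f_h3)` do not depend on the coordinate `x_h3`:
they take equal values at any two points of `X₊` agreeing in all coordinates
except possibly `x_h3` (index `12`).  Hence the zero-dynamics vector field
`q = r ∘ Φ⁻¹` is independent of `η₄ = x_h3`. -/
theorem two_site_zero_dynamics_independent_of_eta4 (p : Params)
    (x x' : St) (hx : x ∈ Xplus) (hx' : x' ∈ Xplus)
    (hagree : ∀ i : Fin 13, i ≠ 12 → x i = x' i) :
    (∀ k ≤ 4, lieIt p.drift k p.hE x = lieIt p.drift k p.hE x') ∧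
    (∀ k ≤ 3, lieIt p.drift k p.hH x = lieIt p.drift k p.hH x') ∧
    (x 2 = x' 2 ∧ x 6 = x' 6 ∧ x 7 = x' 7) ∧
    (p.drift x 2 = p.drift x' 2 ∧ p.drift x 6 = p.drift x' 6 ∧
     p.drift x 7 = p.drift x' 7 ∧ p.drift x 12 = p.drift x' 12) := by
  have hQ : Q12 x = Q12 x' := by
    funext i
    by_cases hi : i = (12 : Fin 13)
    · subst hi; rw [Q12_apply_12, Q12_apply_12]
    · rw [Q12_apply_ne _ _ hi, Q12_apply_ne _ _ hi, hagree i hi]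
  have hEinv : ∀ z : St, p.hE (Q12 z) = p.hE z := by
    intro z
    unfold Params.hE
    rw [Q12_apply_ne z 6 (by decide), Q12_apply_ne z 8 (by decide)]
  have hHinv : ∀ z : St, p.hH (Q12 z) = p.hH z := by
    intro z
    unfold Params.hH
    rw [Q12_apply_ne z 11 (by decide)]
  have heq : ∀ (h : St → ℝ), (∀ z : St, h (Q12 z) = h z) → ∀ k : ℕ,
      lieIt p.drift k h x = lieIt p.drift k h x' := by
    intro h hinv k
    rw [← lieIt_invariant p h hinv k x, hQ, lieIt_invariant p h hinv k x']
  have hdr : p.drift x = p.drift x' := drift_congr p hagree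
  refine ⟨fun k _ => heq p.hE hEinv k, fun k _ => heq p.hH hHinv k,
    ⟨hagree 2 (by decide), hagree 6 (by decide), hagree 7 (by decide)⟩,
    ⟨?_, ?_, ?_, ?_⟩⟩ <;> rw [hdr]
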